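/- arXiv:2507.11970 — 3 statements merged into one kernel-verified Lean document; each statement's English description precedes it below -/
import Mathlib

section
/- Gentle measurement: let ρ be a density matrix and Π a projector with Tr(Πρ) ≤ ε < 1. Let ρ' = (I−Π)ρ(I−Π)/Tr((I−Π)ρ) be the post-measurement state after obtaining the outcome I−Π. Then the trace distance (1/2)‖ρ − ρ'‖₁ is at most 2√ε. -/
open scoped Matrix ComplexOrder

/-- Trace norm `‖A‖₁ = Tr √(AᴴA)`. -/
noncomputable def traceNorm {m : Type*} [Fintype m] [DecidableEq m] (A : Matrix m m ℂ) : ℝ :=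
  ∑ i, Real.sqrt ((Matrix.isHermitian_conjTranspose_mul_self A).eigenvalues i)

/-!
With `Q = 1 - P`, `a = Tr(PρP)` and `b = Tr(QρQ) = 1 - a`, expanding `ρ = (P + Q) ρ (P + Q)` gives
`ρ - ρ' = PρP + PρQ + QρP + (1 - 1/b) QρQ`. The trace norm of a Hermitian `H` is `Tr(S H)` for the
unitary `S = sign H`, and Cauchy–Schwarz for the semi-inner product `⟪X, Y⟫ = Tr(Y ρ Xᴴ)` bounds
`|Tr(S A ρ B)|` by `√Tr(AρA) √Tr(BρB)`. Hence `‖ρ - ρ'‖₁ ≤ a + 2√(ab) + (1/b - 1) b ≤ 4√a ≤ 4√ε`.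
-/

open scoped MatrixOrder

theorem sub_smul_mul_mul_eq_of_add_eq_one {R A : Type*} [Ring R] [Ring A] [Module R A]
    {P Q : A} (hPQ : P + Q = 1) (ρ : A) (c : R) :
    ρ - c • (Q * ρ * Q) = P * ρ * P + P * ρ * Q + Q * ρ * P + (1 - c) • (Q * ρ * Q) := by
  have hρ : ρ = (P + Q) * ρ * (P + Q) := by rw [hPQ, one_mul, mul_one]
  nth_rewrite 1 [hρ]
  simp only [add_mul, mul_add, sub_smul, one_smul]
  abel

namespace Matrix

variable {n 𝕜 : Type*} [Fintype n] [RCLike 𝕜]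

theorem trace_mul_mul_self_of_idempotent {A : Matrix n n 𝕜} (hA : A * A = A) (M : Matrix n n 𝕜) :
    (A * M * A).trace = (A * M).trace := by
  rw [trace_mul_cycle, hA]

theorem PosSemidef.re_trace_mul_mul_nonneg {ρ P : Matrix n n ℂ} (hρ : ρ.PosSemidef)
    (hP : P.IsHermitian) : 0 ≤ (P * ρ * P).trace.re := by
  simpa [hP.eq] using (Complex.nonneg_iff.mp (hρ.mul_mul_conjTranspose_same P).trace_nonneg).1

theorem PosSemidef.norm_trace_mul_mul_conjTranspose_le {ρ : Matrix n n 𝕜} (hρ : ρ.PosSemidef)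
    (X Y : Matrix n n 𝕜) :
    ‖(Y * ρ * Xᴴ).trace‖ ≤
      √(RCLike.re (X * ρ * Xᴴ).trace) * √(RCLike.re (Y * ρ * Yᴴ).trace) := by
  let := ρ.toMatrixSeminormedAddCommGroup hρ
  let := ρ.toMatrixInnerProductSpace hρ
  exact norm_inner_le_norm (𝕜 := 𝕜) X Y

variable [DecidableEq n]

theorem trace_unitary_conj {S : Matrix n n 𝕜} (hS : S ∈ unitary (Matrix n n 𝕜))
    (M : Matrix n n 𝕜) : (S * M * star S).trace = M.trace := by
  rw [trace_mul_cycle, Unitary.star_mul_self_of_mem hS, one_mul]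

theorem PosSemidef.norm_trace_unitary_mul_le {ρ S : Matrix n n 𝕜} (hρ : ρ.PosSemidef)
    (hS : S ∈ unitary (Matrix n n 𝕜)) (A B : Matrix n n 𝕜) :
    ‖(S * (A * ρ * Bᴴ)).trace‖ ≤
      √(RCLike.re (A * ρ * Aᴴ).trace) * √(RCLike.re (B * ρ * Bᴴ).trace) := by
  have hSA : S * A * ρ * (S * A)ᴴ = S * (A * ρ * Aᴴ) * star S := by
    simp only [conjTranspose_mul, star_eq_conjTranspose, mul_assoc]
  rw [mul_comm, ← trace_unitary_conj hS (A * ρ * Aᴴ), ← hSA]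
  simpa only [mul_assoc] using hρ.norm_trace_mul_mul_conjTranspose_le B (S * A)

theorem IsHermitian.trace_cfc {A : Matrix n n 𝕜} (hA : A.IsHermitian) (f : ℝ → ℝ) :
    (cfc f A).trace = ∑ i, (f (hA.eigenvalues i) : 𝕜) := by
  rw [hA.cfc_eq, IsHermitian.cfc, Unitary.conjStarAlgAut_apply, trace_mul_cycle,
    Unitary.coe_star_mul_self, one_mul, trace_diagonal]
  rfl

theorem IsHermitian.exists_mem_unitary_mul_eq_abs {H : Matrix n n 𝕜} (hH : H.IsHermitian) :
    ∃ S ∈ unitary (Matrix n n 𝕜), S * H = CFC.abs H := by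
  have hcont (f : ℝ → ℝ) : ContinuousOn f (spectrum ℝ H) :=
    (hH.spectrum_real_eq_range_eigenvalues ▸ Set.finite_range _).continuousOn f
  set sgn : ℝ → ℝ := fun x ↦ if x < 0 then -1 else 1
  have hsgn_sq : cfc sgn H * cfc sgn H = 1 := by
    rw [← cfc_mul _ _ _ (hcont _) (hcont _), ← cfc_one ℝ H]
    exact cfc_congr fun x _ ↦ by by_cases hx : x < 0 <;> simp [sgn, hx]
  refine ⟨cfc sgn H, ?_, ?_⟩
  · rw [Unitary.mem_iff, IsSelfAdjoint.cfc.star_eq]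
    exact ⟨hsgn_sq, hsgn_sq⟩
  · nth_rewrite 2 [← cfc_id' ℝ H]
    rw [← cfc_mul _ _ _ (hcont _) (hcont _), CFC.abs_eq_cfc_norm H hH.isSelfAdjoint]
    refine cfc_congr fun x _ ↦ ?_
    by_cases hx : x < 0
    · simp [sgn, hx, abs_of_neg hx]
    · simp [sgn, hx, abs_of_nonneg (not_lt.mp hx)]

end Matrix

open Matrix

theorem trace_abs_eq_traceNorm {n : Type*} [Fintype n] [DecidableEq n] (A : Matrix n n ℂ) :
    (CFC.abs A).trace = traceNorm A := by
  have hA := posSemidef_conjTranspose_mul_self A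
  rw [CFC.abs.eq_1, star_eq_conjTranspose, CFC.sqrt_eq_real_sqrt _ hA.nonneg, cfcₙ_eq_cfc,
    hA.isHermitian.trace_cfc, traceNorm, Complex.ofReal_sum]
  rfl

theorem Matrix.IsHermitian.exists_mem_unitary_trace_mul_eq_traceNorm {n : Type*} [Fintype n]
    [DecidableEq n] {H : Matrix n n ℂ} (hH : H.IsHermitian) :
    ∃ S ∈ unitary (Matrix n n ℂ), (S * H).trace = traceNorm H := by
  obtain ⟨S, hS, hSH⟩ := hH.exists_mem_unitary_mul_eq_abs
  exact ⟨S, hS, by rw [hSH, trace_abs_eq_traceNorm]⟩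

theorem traceNorm_sub_smul_mul_mul_le {n : Type*} [Fintype n] [DecidableEq n]
    {ρ P Q : Matrix n n ℂ} (hρ : ρ.PosSemidef) (hP : P.IsHermitian) (hQ : Q.IsHermitian)
    (hPQ : P + Q = 1) (c : ℝ) :
    traceNorm (ρ - (c : ℂ) • (Q * ρ * Q)) ≤
      (P * ρ * P).trace.re + 2 * √(P * ρ * P).trace.re * √(Q * ρ * Q).trace.re +
        |1 - c| * (Q * ρ * Q).trace.re := by
  have hH : (ρ - (c : ℂ) • (Q * ρ * Q)).IsHermitian := by
    simp only [IsHermitian, conjTranspose_sub, conjTranspose_smul, conjTranspose_mul,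
      hρ.isHermitian.eq, hQ.eq, Complex.star_def, Complex.conj_ofReal, mul_assoc]
  obtain ⟨S, hS, hSH⟩ := hH.exists_mem_unitary_trace_mul_eq_traceNorm
  have hbound (A B : Matrix n n ℂ) (hA : A.IsHermitian) (hB : B.IsHermitian) :
      ‖(S * (A * ρ * B)).trace‖ ≤ √(A * ρ * A).trace.re * √(B * ρ * B).trace.re := by
    simpa only [hA.eq, hB.eq, RCLike.re_to_complex] using hρ.norm_trace_unitary_mul_le hS A B
  have hPρP := hbound P P hP hP
  have hQρQ := hbound Q Q hQ hQ
  rw [Real.mul_self_sqrt (hρ.re_trace_mul_mul_nonneg hP)] at hPρP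
  rw [Real.mul_self_sqrt (hρ.re_trace_mul_mul_nonneg hQ)] at hQρQ
  have hPρQ := hbound P Q hP hQ
  have hQρP := hbound Q P hQ hP
  rw [mul_comm √(Q * ρ * Q).trace.re] at hQρP
  calc traceNorm (ρ - (c : ℂ) • (Q * ρ * Q)) ≤ ‖(S * (ρ - (c : ℂ) • (Q * ρ * Q))).trace‖ := by
        rw [hSH, Complex.norm_real]
        exact Real.le_norm_self _
    _ ≤ ‖(S * (P * ρ * P)).trace‖ + ‖(S * (P * ρ * Q)).trace‖ + ‖(S * (Q * ρ * P)).trace‖ +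
          |1 - c| * ‖(S * (Q * ρ * Q)).trace‖ := by
        rw [sub_smul_mul_mul_eq_of_add_eq_one hPQ, ← Complex.ofReal_one, ← Complex.ofReal_sub]
        simp only [mul_add, Matrix.mul_smul, trace_add, trace_smul, smul_eq_mul]
        refine norm_add₄_le.trans_eq ?_
        rw [norm_mul, Complex.norm_real, Real.norm_eq_abs]
    _ ≤ _ := by linarith [mul_le_mul_of_nonneg_left hQρQ (abs_nonneg (1 - c))]

theorem traceNorm_sub_inv_smul_mul_mul_le {n : Type*} [Fintype n] [DecidableEq n]
    {ρ P Q : Matrix n n ℂ} (hρ : ρ.PosSemidef) (hP : P.IsHermitian) (hQ : Q.IsHermitian)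
    (hPQ : P + Q = 1) (hsum : (P * ρ * P).trace.re + (Q * ρ * Q).trace.re = 1)
    (hb : 0 < (Q * ρ * Q).trace.re) :
    traceNorm (ρ - (((Q * ρ * Q).trace.re)⁻¹ : ℂ) • (Q * ρ * Q)) ≤ 4 * √(P * ρ * P).trace.re := by
  have hbound := traceNorm_sub_smul_mul_mul_le hρ hP hQ hPQ ((Q * ρ * Q).trace.re)⁻¹
  push_cast at hbound
  set a := (P * ρ * P).trace.re
  set b := (Q * ρ * Q).trace.re
  have ha : 0 ≤ a := hρ.re_trace_mul_mul_nonneg hP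
  have hcoef : |1 - b⁻¹| * b = a := by
    rw [abs_of_nonpos (sub_nonpos.mpr (one_le_inv₀ hb |>.mpr (by linarith))), neg_sub, sub_mul,
      inv_mul_cancel₀ hb.ne']
    linarith
  have hsqrt_b : √b ≤ 1 := Real.sqrt_le_one.mpr (by linarith)
  have ha_sqrt : a ≤ √a := Real.le_sqrt_self_iff.mpr (by linarith)
  nlinarith [Real.sqrt_nonneg a]

/-- **gentle measurement.** Let `ρ` be a density matrix and `P` a projector
with `Tr(Pρ) ≤ ε < 1`.  The post-measurement state
`ρ' = (I−P)ρ(I−P)/Tr((I−P)ρ(I−P))` satisfies `(1/2)‖ρ − ρ'‖₁ ≤ 2√ε`. -/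
theorem stmt2 {ι : Type} [Fintype ι] [DecidableEq ι]
    (ρ P : Matrix ι ι ℂ) (ε : ℝ)
    (hρ : ρ.PosSemidef) (htr : ρ.trace = 1)
    (hproj : P * P = P) (hherm : Pᴴ = P)
    (hε : ((P * ρ).trace).re ≤ ε) (hε1 : ε < 1) :
    (1 / 2) * traceNorm (ρ -
        ((((1 : Matrix ι ι ℂ) - P) * ρ * ((1 : Matrix ι ι ℂ) - P)).trace)⁻¹ •
          (((1 : Matrix ι ι ℂ) - P) * ρ * ((1 : Matrix ι ι ℂ) - P)))
      ≤ 2 * Real.sqrt ε := by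
  set Q := 1 - P
  have hP : P.IsHermitian := hherm
  have hQ : Q.IsHermitian := by simp [Q, IsHermitian, hherm]
  have hQQ : Q * Q = Q := by simp [Q, sub_mul, mul_sub, hproj]
  have hPρP : (P * ρ * P).trace.re ≤ ε := by rwa [trace_mul_mul_self_of_idempotent hproj]
  have hsum : (P * ρ * P).trace.re + (Q * ρ * Q).trace.re = 1 := by
    rw [← Complex.add_re, trace_mul_mul_self_of_idempotent hproj,
      trace_mul_mul_self_of_idempotent hQQ, ← trace_add, ← add_mul, add_sub_cancel, one_mul, htr,
      Complex.one_re]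
  have hQρQ : (Q * ρ * Q).trace = (Q * ρ * Q).trace.re := Complex.eq_re_of_ofReal_le (r := 0)
    (by simpa [hQ.eq] using (hρ.mul_mul_conjTranspose_same Q).trace_nonneg)
  have hbound := traceNorm_sub_inv_smul_mul_mul_le hρ hP hQ (add_sub_cancel P 1) hsum
    (by linarith)
  rw [← hQρQ] at hbound
  have := Real.sqrt_le_sqrt hPρP
  linarith
end

section
/- Pauli key update for the coset authentication code: with key k = (S, Δ, x, z) and Pauli P = X^u Z^v on n qubits, define k_P = (S, Δ, x', z') where x'_i = x_i ⊕ u_iΔ and z'_i = z_i ⊕ v_i Δ̂ (Δ̂ ∈ S^⊥ with ⟨Δ̂,Δ⟩ = 1). Then the encoding isometries satisfy Enc_{k_P} = (−1)^{Σ_i u_i⟨Δ,z_i⟩} · Enc_k ∘ P; i.e., they agree up to a global phase. -/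
open scoped Classical

/-- Amplitude, at basis point `c ∈ F₂^d`, of the single-block encoding
`X^x Z^z |S + wΔ⟩`, where `|S + v⟩ = |S|^{-1/2} Σ_{s∈S} |s+v⟩`. -/
noncomputable def blockEnc {d : ℕ} (S : Submodule (ZMod 2) (Fin d → ZMod 2))
    (Δ : Fin d → ZMod 2) (x z : Fin d → ZMod 2) (w : ZMod 2) :
    (Fin d → ZMod 2) → ℂ :=
  fun c => (if c + x + w • Δ ∈ S then 1 else 0) *
    (-1 : ℂ) ^ ((∑ j, z j * (c j + x j) : ZMod 2)).val *
    ((Real.sqrt (Nat.card S) : ℝ) : ℂ)⁻¹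

/-- The coset-authentication encoding `Enc_k` with key `k = (S, Δ, x, z)`, acting on an
`n`-qubit plaintext amplitude function `ψ`. -/
noncomputable def cosetEnc {d n : ℕ} (S : Submodule (ZMod 2) (Fin d → ZMod 2))
    (Δ : Fin d → ZMod 2) (x z : Fin n → (Fin d → ZMod 2))
    (ψ : (Fin n → ZMod 2) → ℂ) : (Fin n → (Fin d → ZMod 2)) → ℂ :=
  fun c => ∑ w : Fin n → ZMod 2, ψ w * ∏ i, blockEnc S Δ (x i) (z i) (w i) (c i)

/-- The `n`-qubit Pauli `X^u Z^v` acting on plaintext amplitude functions: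
`X^u Z^v |w⟩ = (−1)^{⟨v,w⟩} |w ⊕ u⟩`. -/
def pauliAct {n : ℕ} (u v : Fin n → ZMod 2)
    (ψ : (Fin n → ZMod 2) → ℂ) : (Fin n → ZMod 2) → ℂ :=
  fun w => (-1 : ℂ) ^ ((∑ i, v i * (w i + u i) : ZMod 2)).val * ψ (w + u)

/-! The key update moves the plaintext bit of every block from `w` to `w + u` (the `X` part) and
multiplies each block by the sign `(−1)^{⟨Δ̂, c + x⟩}`. On the support `c + x + (w + u)Δ ∈ S`
that pairing equals `w + u`, because `Δ̂ ⊥ S` and `⟨Δ̂, Δ⟩ = 1`; so the sign is the `Z^v` phase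
of the Pauli times the global phase `(−1)^{u⟨Δ, z⟩}`. -/

open Matrix

noncomputable def negOnePowChar : AddChar (ZMod 2) ℂ where
  toFun a := (-1 : ℂ) ^ a.val
  map_zero_eq_one' := by simp
  map_add_eq_mul' a b := by simp only [ZMod.val_add, ← neg_one_pow_eq_pow_mod_two, pow_add]

lemma AddChar.map_sum_eq_prod {A M ι : Type*} [AddCommMonoid A] [CommMonoid M]
    (ψ : AddChar A M) (s : Finset ι) (f : ι → A) : ψ (∑ i ∈ s, f i) = ∏ i ∈ s, ψ (f i) :=
  map_prod ψ.toMonoidHom (fun i => Multiplicative.ofAdd (f i)) s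

lemma dotProduct_eq_neg_of_add_smul_mem {R ι : Type*} [CommRing R] [Fintype ι]
    {S : Submodule R (ι → R)} {Δ Δhat : ι → R} (hperp : ∀ s ∈ S, Δhat ⬝ᵥ s = 0)
    (hpair : Δhat ⬝ᵥ Δ = 1) {c : ι → R} {a : R} (hmem : c + a • Δ ∈ S) :
    Δhat ⬝ᵥ c = -a := by
  have h := hperp _ hmem
  rw [dotProduct_add, dotProduct_smul, hpair, smul_eq_mul, mul_one] at h
  exact eq_neg_of_add_eq_zero_left h

lemma blockEnc_keyUpdate {d : ℕ} {S : Submodule (ZMod 2) (Fin d → ZMod 2)}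
    {Δ Δhat : Fin d → ZMod 2} (hperp : ∀ s ∈ S, Δhat ⬝ᵥ s = 0) (hpair : Δhat ⬝ᵥ Δ = 1)
    (x z : Fin d → ZMod 2) (u v w : ZMod 2) (c : Fin d → ZMod 2) :
    blockEnc S Δ (x + u • Δ) (z + v • Δhat) w c
      = negOnePowChar (u * (Δ ⬝ᵥ z)) * negOnePowChar (v * w) * blockEnc S Δ x z (w + u) c := by
  have hcoset : c + (x + u • Δ) + w • Δ = c + x + (w + u) • Δ := by rw [add_smul]; abel
  change (if _ then 1 else 0) * negOnePowChar ((z + v • Δhat) ⬝ᵥ (c + (x + u • Δ))) * _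
    = _ * _ * ((if _ then 1 else 0) * negOnePowChar (z ⬝ᵥ (c + x)) * _)
  rw [hcoset]
  by_cases hmem : c + x + (w + u) • Δ ∈ S
  · have hΔhat : Δhat ⬝ᵥ (c + x) = w + u := by
      rw [dotProduct_eq_neg_of_add_smul_mem hperp hpair hmem, ZModModule.neg_eq_self]
    have hphase : (z + v • Δhat) ⬝ᵥ (c + (x + u • Δ))
        = u * (Δ ⬝ᵥ z) + (v * w + z ⬝ᵥ (c + x)) := by
      rw [← add_assoc, add_dotProduct, smul_dotProduct, dotProduct_add, dotProduct_add,
        dotProduct_add, hΔhat, dotProduct_smul, dotProduct_smul, hpair, dotProduct_comm z Δ]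
      simp only [smul_eq_mul]
      have htwo : (2 : ZMod 2) = 0 := rfl
      linear_combination (u * v) * htwo
    simp only [hmem, if_true, hphase, AddChar.map_add_eq_mul]
    ring
  · simp only [hmem, if_false]
    ring

lemma pauliAct_add_right {n : ℕ} (u v : Fin n → ZMod 2) (ψ : (Fin n → ZMod 2) → ℂ)
    (w : Fin n → ZMod 2) :
    pauliAct u v ψ (w + u) = negOnePowChar (v ⬝ᵥ w) * ψ w := by
  have hw : w + u + u = w := by rw [add_assoc, ZModModule.add_self, add_zero]
  change negOnePowChar (v ⬝ᵥ (w + u + u)) * ψ (w + u + u) = _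
  rw [hw]

theorem stmt5_general {d n : ℕ} (S : Submodule (ZMod 2) (Fin d → ZMod 2))
    (Δ Δhat : Fin d → ZMod 2)
    (hperp : ∀ s ∈ S, (∑ j, Δhat j * s j : ZMod 2) = 0)
    (hpair : (∑ j, Δhat j * Δ j : ZMod 2) = 1)
    (x z : Fin n → (Fin d → ZMod 2)) (u v : Fin n → ZMod 2)
    (ψ : (Fin n → ZMod 2) → ℂ) :
    cosetEnc S Δ (fun i => x i + u i • Δ) (fun i => z i + v i • Δhat) ψ
      = ((-1 : ℂ) ^ ((∑ i, u i * (∑ j, Δ j * z i j) : ZMod 2)).val) •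
          cosetEnc S Δ x z (pauliAct u v ψ) := by
  funext c
  -- the frozen sums are dot products, and `(-1) ^ a.val` is `negOnePowChar a`, definitionally
  change ∑ w, _ = negOnePowChar (∑ i, u i * (Δ ⬝ᵥ z i)) * ∑ w, _
  rw [Finset.mul_sum]
  refine Fintype.sum_equiv (Equiv.addRight u) _ _ fun w => ?_
  have hblocks := fun i => blockEnc_keyUpdate hperp hpair (x i) (z i) (u i) (v i) (w i) (c i)
  simp only [hblocks, Finset.prod_mul_distrib, ← AddChar.map_sum_eq_prod, Equiv.coe_addRight,
    pauliAct_add_right, Pi.add_apply]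
  change _ * (_ * negOnePowChar (v ⬝ᵥ w) * _) = _
  ring

/-- **Pauli key update.** With key `k = (S, Δ, x, z)` and Pauli
`P = X^u Z^v`, define `k_P = (S, Δ, x', z')` with `x'_i = x_i ⊕ u_i Δ` and
`z'_i = z_i ⊕ v_i Δ̂`, where `Δ̂ ∈ S^⊥` and `⟨Δ̂, Δ⟩ = 1`.  Then
`Enc_{k_P} = (−1)^{Σ_i u_i ⟨Δ, z_i⟩} · Enc_k ∘ P`. -/
theorem stmt5 {d n : ℕ} (S : Submodule (ZMod 2) (Fin d → ZMod 2))
    (Δ Δhat : Fin d → ZMod 2) (hΔ : Δ ∉ S)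
    (hperp : ∀ s ∈ S, (∑ j, Δhat j * s j : ZMod 2) = 0)
    (hpair : (∑ j, Δhat j * Δ j : ZMod 2) = 1)
    (x z : Fin n → (Fin d → ZMod 2)) (u v : Fin n → ZMod 2)
    (ψ : (Fin n → ZMod 2) → ℂ) :
    cosetEnc S Δ (fun i => x i + u i • Δ) (fun i => z i + v i • Δhat) ψ
      = ((-1 : ℂ) ^ ((∑ i, u i * (∑ j, Δ j * z i j) : ZMod 2)).val) •
          cosetEnc S Δ x z (pauliAct u v ψ) :=
  stmt5_general S Δ Δhat hperp hpair x z u v ψ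
end

section
/- Query-growth bound: let F be a unitary, Π a projector with ‖Π F (I−Π)‖_op ≤ δ, and |ψ⟩ a state with Π|ψ⟩ = 0. If 𝒜 is a q-query algorithm whose interleaved unitaries U_i all commute with Π, then ‖Π 𝒜^{F}|ψ⟩‖ ≤ q·δ. -/
open scoped Matrix

/-- The ℓ²→ℓ² operator norm of a complex matrix. -/
noncomputable def opNorm {m n : Type*} [Fintype m] [Fintype n] [DecidableEq n]
    (A : Matrix m n ℂ) : ℝ :=
  ‖LinearMap.toContinuousLinearMap (Matrix.toEuclideanLin A)‖

/-- ℓ²-norm of a complex vector. -/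
noncomputable def vecNorm {ι : Type*} [Fintype ι] (v : ι → ℂ) : ℝ :=
  Real.sqrt (∑ i, ‖v i‖ ^ 2)

/-- A `q`-query algorithm: `runAlg Us F q = U_q F U_{q−1} F ⋯ U_1 F U_0`. -/
noncomputable def runAlg {ι : Type*} [Fintype ι] (Us : ℕ → Matrix ι ι ℂ)
    (F : Matrix ι ι ℂ) : ℕ → Matrix ι ι ℂ
  | 0 => Us 0
  | (q + 1) => Us (q + 1) * F * runAlg Us F q

/-!
Write `δ = ‖Π F (1 − Π)‖`. For contractions `Π`, `F`, `U` with `U` commuting with `Π`,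
`Π U F w = U (Π F (1 − Π) w + Π F Π w)`, hence `‖Π U F w‖ ≤ δ ‖w‖ + ‖Π w‖`: each query
moves at most `δ ‖w‖` of norm into the range of `Π`. Starting from `Π ψ = 0` and iterating
along the algorithm, whose partial products are unitary, gives `‖Π 𝒜^F ψ‖ ≤ q δ ‖ψ‖`.
-/

namespace ContinuousLinearMap

variable {𝕜 E : Type*} [NontriviallyNormedField 𝕜] [SeminormedAddCommGroup E]
  [NormedSpace 𝕜 E]

theorem norm_apply_le_of_opNorm_le_one {A : E →L[𝕜] E} (hA : ‖A‖ ≤ 1)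
    (x : E) : ‖A x‖ ≤ ‖x‖ :=
  (A.le_of_opNorm_le hA x).trans_eq (one_mul _)

theorem norm_apply_mul_apply_le_of_commute {P F U : E →L[𝕜] E}
    (hP : ‖P‖ ≤ 1) (hF : ‖F‖ ≤ 1) (hU : ‖U‖ ≤ 1) (hUP : Commute U P) (w : E) :
    ‖P ((U * F) w)‖ ≤ ‖P * F * (1 - P)‖ * ‖w‖ + ‖P w‖ := by
  have hsplit : P (F w) = (P * F * (1 - P)) w + P (F (P w)) := by
    simp [sub_apply]
  calc ‖P ((U * F) w)‖
    _ = ‖U (P (F w))‖ := by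
      change ‖(P * U * F) w‖ = _
      rw [← hUP.eq]; rfl
    _ ≤ ‖P (F w)‖ := norm_apply_le_of_opNorm_le_one hU _
    _ ≤ ‖(P * F * (1 - P)) w‖ + ‖P (F (P w))‖ := hsplit ▸ norm_add_le _ _
    _ ≤ ‖P * F * (1 - P)‖ * ‖w‖ + ‖P w‖ := by
      gcongr
      · exact le_opNorm _ _
      · exact (norm_apply_le_of_opNorm_le_one hP _).trans (norm_apply_le_of_opNorm_le_one hF _)

end ContinuousLinearMap

theorem vecNorm_eq_norm_toLp {ι : Type*} [Fintype ι] (v : ι → ℂ) :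
    vecNorm v = ‖WithLp.toLp 2 v‖ := by
  rw [EuclideanSpace.norm_eq]; rfl

theorem vecNorm_zero {ι : Type*} [Fintype ι] : vecNorm (0 : ι → ℂ) = 0 := by
  simp [vecNorm]

section Matrix

variable {ι : Type*} [Fintype ι] [DecidableEq ι]

local notation "T" => Matrix.toEuclideanCLM (𝕜 := ℂ) (n := ι)

theorem opNorm_eq_norm_toEuclideanCLM (A : Matrix ι ι ℂ) : opNorm A = ‖T A‖ := rfl

theorem norm_toEuclideanCLM_le_one_of_mem_unitaryGroup {U : Matrix ι ι ℂ}
    (hU : U ∈ Matrix.unitaryGroup ι ℂ) : ‖T U‖ ≤ 1 := by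
  nontriviality EuclideanSpace ℂ ι
  exact (CStarRing.norm_of_mem_unitary (Unitary.map_mem _ hU)).le

theorem norm_toEuclideanCLM_le_one_of_isStarProjection {P : Matrix ι ι ℂ}
    (hP : IsStarProjection P) : ‖T P‖ ≤ 1 :=
  IsStarProjection.norm_le _ (hP.map _)

theorem runAlg_mem_unitaryGroup {Us : ℕ → Matrix ι ι ℂ} {F : Matrix ι ι ℂ}
    (hU : ∀ i, Us i ∈ Matrix.unitaryGroup ι ℂ) (hF : F ∈ Matrix.unitaryGroup ι ℂ) :
    ∀ q, runAlg Us F q ∈ Matrix.unitaryGroup ι ℂ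
  | 0 => hU 0
  | q + 1 => mul_mem (mul_mem (hU (q + 1)) hF) (runAlg_mem_unitaryGroup hU hF q)

theorem vecNorm_mulVec_runAlg_le {Us : ℕ → Matrix ι ι ℂ} {F P : Matrix ι ι ℂ}
    (hU : ∀ i, Us i ∈ Matrix.unitaryGroup ι ℂ) (hF : F ∈ Matrix.unitaryGroup ι ℂ)
    (hP : IsStarProjection P) (hcomm : ∀ i, Commute (Us i) P) (v : ι → ℂ) (q : ℕ) :
    vecNorm (P *ᵥ (runAlg Us F q *ᵥ v)) ≤
      vecNorm (P *ᵥ v) + q * opNorm (P * F * (1 - P)) * vecNorm v := by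
  simp only [vecNorm_eq_norm_toLp, ← Matrix.toEuclideanCLM_toLp, opNorm_eq_norm_toEuclideanCLM]
  rw [map_mul, map_mul, map_sub, map_one]
  generalize WithLp.toLp 2 v = x
  have hPn := norm_toEuclideanCLM_le_one_of_isStarProjection hP
  have hUn i := norm_toEuclideanCLM_le_one_of_mem_unitaryGroup (hU i)
  have hrun q : ‖T (runAlg Us F q) x‖ ≤ ‖x‖ :=
    ContinuousLinearMap.norm_apply_le_of_opNorm_le_one
      (norm_toEuclideanCLM_le_one_of_mem_unitaryGroup (runAlg_mem_unitaryGroup hU hF q)) x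
  induction q with
  | zero =>
    calc ‖T P (T (runAlg Us F 0) x)‖
      _ = ‖T (Us 0) (T P x)‖ := by
        change ‖(T P * T (Us 0)) x‖ = ‖(T (Us 0) * T P) x‖
        rw [← map_mul, ← map_mul, (hcomm 0).eq]
      _ ≤ ‖T P x‖ := ContinuousLinearMap.norm_apply_le_of_opNorm_le_one (hUn 0) _
      _ = _ := by simp
  | succ n ih =>
    have hstep := ContinuousLinearMap.norm_apply_mul_apply_le_of_commute hPn
      (norm_toEuclideanCLM_le_one_of_mem_unitaryGroup hF) (hUn (n + 1)) ((hcomm (n + 1)).map T)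
      (T (runAlg Us F n) x)
    calc ‖T P (T (runAlg Us F (n + 1)) x)‖
      _ = ‖T P ((T (Us (n + 1)) * T F) (T (runAlg Us F n) x))‖ := by
        rw [runAlg, map_mul, map_mul]; rfl
      _ ≤ _ := hstep
      _ ≤ ‖T P * T F * (1 - T P)‖ * ‖x‖ +
          (‖T P x‖ + n * ‖T P * T F * (1 - T P)‖ * ‖x‖) := by
        gcongr
        exact hrun n
      _ = _ := by push_cast; ring

end Matrix

/-- **query-growth bound.** Let `F` be a unitary, `Π` a projector with
`‖Π F (I−Π)‖_op ≤ δ`, and `ψ` a state with `Πψ = 0`.  If the interleaved unitaries of a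
`q`-query algorithm all commute with `Π`, then `‖Π 𝒜^F ψ‖ ≤ q·δ`. -/
theorem stmt15 {ι : Type} [Fintype ι] [DecidableEq ι]
    (F Pr : Matrix ι ι ℂ) (δ : ℝ)
    (hF : F ∈ Matrix.unitaryGroup ι ℂ)
    (hPr : Pr * Pr = Pr) (hPrh : Prᴴ = Pr)
    (hδ : opNorm (Pr * F * (1 - Pr)) ≤ δ)
    (ψ : ι → ℂ) (hψ0 : Pr.mulVec ψ = 0) (hψ : vecNorm ψ = 1)
    (q : ℕ) (Us : ℕ → Matrix ι ι ℂ)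
    (hU : ∀ i, Us i ∈ Matrix.unitaryGroup ι ℂ)
    (hcomm : ∀ i, Us i * Pr = Pr * Us i) :
    vecNorm (Pr.mulVec ((runAlg Us F q).mulVec ψ)) ≤ q * δ :=
  calc vecNorm (Pr *ᵥ (runAlg Us F q *ᵥ ψ))
    _ ≤ vecNorm (Pr *ᵥ ψ) + q * opNorm (Pr * F * (1 - Pr)) * vecNorm ψ :=
      vecNorm_mulVec_runAlg_le hU hF ⟨hPr, hPrh⟩ hcomm ψ q
    _ ≤ q * δ := by
      rw [hψ0, hψ, vecNorm_zero, zero_add, mul_one]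
      gcongr
end
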